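/- arXiv:2509.07972 — 2 statements merged into one kernel-verified Lean document; each statement's English description precedes it below -/
import Mathlib

section
/- Let f : ℝ^d → ℝ be (ρ, K₀, K_ρ)-smooth with f* = inf f > −∞. Fix x ∈ ℝ^d, let Δ = f(x) − f*, fix m > 0, set a = K₀ + K_ρ(m + Δ)^ρ and r = 2m / (‖∇f(x)‖ + √(‖∇f(x)‖² + 4am)). Then for every y ∈ ℝ^d with ‖y − x‖ ≤ r, one has f(y) ≤ f(x) + ⟨∇f(x), y − x⟩ + (a/2)‖y − x‖², and consequently f(y) ≤ f(x) + m. -/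
/-!
On the sublevel set `{f ≤ f x + m}` the smoothness condition bounds the Hessian by
`a = K₀ + K_ρ (m + Δ)^ρ`, so along any segment from `x` that stays in this set, `f` lies
below the quadratic model `f x + ⟪∇f x, y - x⟫ + a/2 ‖y - x‖²`. The radius `r` is the
positive root of `a r² + ‖∇f x‖ r = m`, so inside the ball of radius `r` the model stays
strictly below `f x + m` before time `1`. Hence the first time the segment `[x, y]` leaves
the sublevel set cannot come before `1`, and the segment stays in it.
-/

open Real Set
open scoped RealInnerProductSpace

lemma ContinuousOn.le_on_Icc_of_bootstrap {g : ℝ → ℝ} {a b M : ℝ}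
    (hg : ContinuousOn g (Icc a b)) (ha : g a < M)
    (hstep : ∀ c ∈ Ioo a b, (∀ s ∈ Icc a c, g s ≤ M) → g c < M) :
    ∀ s ∈ Icc a b, g s ≤ M := by
  by_contra! ⟨s, hs, hgs⟩
  set Z := Icc a b ∩ g ⁻¹' Ici M
  have hZ : BddBelow Z := ⟨a, fun t ht => ht.1.1⟩
  have hcZ : sInf Z ∈ Z :=
    (hg.preimage_isClosed_of_isClosed isClosed_Icc isClosed_Ici).csInf_mem ⟨s, hs, hgs.le⟩ hZ
  -- `c` is the first time in `[a, b]` at which `g` reaches `M`.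
  set c := sInf Z
  have hbelow : ∀ t ∈ Ico a c, g t < M := fun t ht => by
    by_contra! h
    exact (csInf_le hZ ⟨⟨ht.1, ht.2.le.trans hcZ.1.2⟩, h⟩).not_gt ht.2
  have hac : a < c := hcZ.1.1.lt_of_ne fun h => (h ▸ hcZ.2 : M ≤ g a).not_gt ha
  have hgc : g c ≤ M := by
    have hcont : ContinuousWithinAt g (Ico a c) c :=
      (hg c hcZ.1).mono fun t ht => ⟨ht.1, ht.2.le.trans hcZ.1.2⟩
    refine hcont.closure_le ?_ continuousWithinAt_const fun t ht => (hbelow t ht).le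
    rw [closure_Ico hac.ne]
    exact right_mem_Icc.2 hac.le
  have hle : ∀ t ∈ Icc a c, g t ≤ M := fun t ht =>
    ht.2.eq_or_lt.elim (fun h => h ▸ hgc) fun h => (hbelow t ⟨ht.1, h⟩).le
  rcases hcZ.1.2.lt_or_eq with hcb | hcb
  · exact (hstep c ⟨hac, hcb⟩ hle).not_ge hcZ.2
  · have hsc : s = c := le_antisymm (hcb ▸ hs.2) (csInf_le hZ ⟨hs, hgs.le⟩)
    exact hgs.not_ge (hsc ▸ hgc)

lemma le_add_deriv_mul_add_of_deriv2_le {h h' h'' : ℝ → ℝ} {T M : ℝ} (hT : 0 ≤ T)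
    (hh : ∀ t ∈ Icc 0 T, HasDerivAt h (h' t) t) (hh' : ∀ t ∈ Icc 0 T, HasDerivAt h' (h'' t) t)
    (hM : ∀ t ∈ Icc 0 T, h'' t ≤ M) :
    h T ≤ h 0 + h' 0 * T + M / 2 * T ^ 2 := by
  have hslope : ∀ t ∈ Icc 0 T, h' t ≤ h' 0 + M * t :=
    image_le_of_deriv_right_le_deriv_boundary (B := fun t => h' 0 + M * t) (B' := fun _ => M)
      (fun t ht => (hh' t ht).continuousAt.continuousWithinAt)
      (fun t ht => (hh' t (Ico_subset_Icc_self ht)).hasDerivWithinAt) (by simp) (by fun_prop)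
      (fun t _ => by
        simpa using (((hasDerivAt_id t).const_mul M).const_add (h' 0)).hasDerivWithinAt)
      fun t ht => hM t (Ico_subset_Icc_self ht)
  refine image_le_of_deriv_right_le_deriv_boundary
      (B := fun t => h 0 + h' 0 * t + M / 2 * t ^ 2) (B' := fun t => h' 0 + M * t)
      (fun t ht => (hh t ht).continuousAt.continuousWithinAt)
      (fun t ht => (hh t (Ico_subset_Icc_self ht)).hasDerivWithinAt) (by simp) (by fun_prop)
      (fun t _ => ?_) (fun t ht => hslope t (Ico_subset_Icc_self ht)) (right_mem_Icc.2 hT)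
  have hB := (((hasDerivAt_id' t).const_mul (h' 0)).const_add (h 0)).fun_add
    ((hasDerivAt_pow 2 t).const_mul (M / 2))
  refine (hB.congr_deriv ?_).hasDerivWithinAt
  norm_num
  ring

variable {F : Type*} [NormedAddCommGroup F] [InnerProductSpace ℝ F]

lemma hasDerivAt_add_smul (x v : F) (t : ℝ) : HasDerivAt (fun s : ℝ => x + s • v) v t := by
  simpa using ((hasDerivAt_id t).smul_const v).const_add x

lemma hasDerivAt_comp_add_smul [CompleteSpace F] {f : F → ℝ} {x v : F} {t : ℝ}
    (hf : DifferentiableAt ℝ f (x + t • v)) :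
    HasDerivAt (fun s : ℝ => f (x + s • v)) ⟪gradient f (x + t • v), v⟫ t := by
  rw [inner_gradient_left]
  exact hf.hasFDerivAt.comp_hasDerivAt t (hasDerivAt_add_smul x v t)

lemma hasDerivAt_inner_comp_add_smul {G : F → F} {x v : F} {t : ℝ}
    (hG : DifferentiableAt ℝ G (x + t • v)) :
    HasDerivAt (fun s : ℝ => ⟪G (x + s • v), v⟫) ⟪fderiv ℝ G (x + t • v) v, v⟫ t := by
  have hGline := hG.hasFDerivAt.comp_hasDerivAt t (hasDerivAt_add_smul x v t)
  simpa using hGline.inner ℝ (hasDerivAt_const t v)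

lemma inner_apply_self_le_of_opNorm_le {A : F →L[ℝ] F} {a : ℝ} (hA : ‖A‖ ≤ a) (v : F) :
    ⟪A v, v⟫ ≤ a * ‖v‖ ^ 2 :=
  calc ⟪A v, v⟫ ≤ ‖A v‖ * ‖v‖ := real_inner_le_norm _ _
    _ ≤ ‖A‖ * ‖v‖ * ‖v‖ := by gcongr; exact A.le_opNorm v
    _ ≤ a * ‖v‖ ^ 2 := by rw [mul_assoc, ← sq]; gcongr

variable [CompleteSpace F]

lemma ContDiff.differentiable_gradient {f : F → ℝ} (hf : ContDiff ℝ 2 f) :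
    Differentiable ℝ (gradient f) :=
  ((InnerProductSpace.toDual ℝ F).symm.toContinuousLinearEquiv.contDiff.comp
    (hf.fderiv_right (m := 1) (by norm_num))).differentiable one_ne_zero

theorem le_add_inner_gradient_add_of_norm_fderiv_gradient_le {f : F → ℝ} (hf : ContDiff ℝ 2 f)
    {x y : F} {a : ℝ} (hH : ∀ w ∈ segment ℝ x y, ‖fderiv ℝ (gradient f) w‖ ≤ a) :
    f y ≤ f x + ⟪gradient f x, y - x⟫ + a / 2 * ‖y - x‖ ^ 2 := by
  have hseg : ∀ t ∈ Icc (0 : ℝ) 1, x + t • (y - x) ∈ segment ℝ x y := fun t ht => by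
    rw [segment_eq_image']; exact mem_image_of_mem _ ht
  have := le_add_deriv_mul_add_of_deriv2_le zero_le_one
    (fun t _ => hasDerivAt_comp_add_smul (hf.differentiable two_ne_zero _))
    (fun t _ => hasDerivAt_inner_comp_add_smul (hf.differentiable_gradient _))
    fun t ht => inner_apply_self_le_of_opNorm_le (hH _ (hseg t ht)) (y - x)
  simp only [zero_smul, add_zero, one_smul, add_sub_cancel, one_pow, mul_one] at this
  linarith

theorem segment_subset_sublevel_of_norm_fderiv_gradient_le {f : F → ℝ} (hf : ContDiff ℝ 2 f)
    {x y : F} {a m : ℝ} (hm : 0 < m)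
    (hH : ∀ w, f w ≤ f x + m → ‖fderiv ℝ (gradient f) w‖ ≤ a)
    (hxy : ‖gradient f x‖ * ‖y - x‖ + a / 2 * ‖y - x‖ ^ 2 ≤ m) :
    ∀ w ∈ segment ℝ x y, f w ≤ f x + m := by
  have ha : 0 ≤ a := (norm_nonneg _).trans (hH x (by linarith))
  set v := y - x
  have hcont : ContinuousOn (fun t : ℝ => f (x + t • v)) (Icc 0 1) :=
    (hf.continuous.comp (continuous_const.add (continuous_id.smul continuous_const))).continuousOn
  have hline := hcont.le_on_Icc_of_bootstrap (M := f x + m) (by simpa using hm) fun c hc hle => by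
    have hHc : ∀ w ∈ segment ℝ x (x + c • v), ‖fderiv ℝ (gradient f) w‖ ≤ a := by
      rw [segment_eq_image', add_sub_cancel_left]
      rintro _ ⟨θ, hθ, rfl⟩
      simp only [smul_smul]
      exact hH _ (hle _ ⟨mul_nonneg hθ.1 hc.1.le, mul_le_of_le_one_left hc.1.le hθ.2⟩)
    have hdesc := le_add_inner_gradient_add_of_norm_fderiv_gradient_le hf hHc
    rw [add_sub_cancel_left, inner_smul_right, norm_smul, Real.norm_of_nonneg hc.1.le] at hdesc
    have hc2 : c ^ 2 ≤ c := by nlinarith [hc.1, hc.2]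
    calc f (x + c • v) ≤ f x + c * ⟪gradient f x, v⟫ + a / 2 * (c * ‖v‖) ^ 2 := hdesc
      _ ≤ f x + c * (‖gradient f x‖ * ‖v‖ + a / 2 * ‖v‖ ^ 2) := by
        have := real_inner_le_norm (gradient f x) v
        rw [mul_pow]
        nlinarith [mul_le_mul_of_nonneg_left hc2 (by positivity : 0 ≤ a / 2 * ‖v‖ ^ 2)]
      _ ≤ f x + c * m := by gcongr; exact hc.1.le
      _ < f x + m := by nlinarith [hc.2]
  rw [segment_eq_image']
  rintro _ ⟨t, ht, rfl⟩
  exact hline t ht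

lemma mul_add_mul_sq_le_of_eq_root {B a m r : ℝ} (hB : 0 ≤ B) (ha : 0 ≤ a) (hm : 0 ≤ m)
    (hr : r = 2 * m / (B + √(B ^ 2 + 4 * a * m))) :
    B * r + a * r ^ 2 ≤ m := by
  set D := √(B ^ 2 + 4 * a * m)
  have hD : D ^ 2 = B ^ 2 + 4 * a * m := Real.sq_sqrt (by positivity)
  rcases (add_nonneg hB (Real.sqrt_nonneg _) : 0 ≤ B + D).eq_or_lt with h | h
  · simp [hr, ← h, hm]
  · have hrBD : r * (B + D) = 2 * m := by rw [hr]; field_simp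
    have : (B * r + a * r ^ 2 - m) * (B + D) ^ 2 = 0 := by
      linear_combination (a * (r * (B + D) + 2 * m) + B * (B + D)) * hrBD - m * hD
    nlinarith [(mul_eq_zero.mp this).resolve_right (by positivity)]

theorem statement5_general (d : ℕ) (f : EuclideanSpace ℝ (Fin d) → ℝ)
    (hf : ContDiff ℝ 2 f)
    (ρ K0 Kρ : ℝ) (hρ : 0 < ρ) (hKρ : 0 ≤ Kρ)
    (fstar : ℝ) (hglb : IsGLB (Set.range f) fstar)
    (hsmooth : ∀ w, ‖fderiv ℝ (gradient f) w‖ ≤ K0 + Kρ * (f w - fstar) ^ ρ)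
    (x : EuclideanSpace ℝ (Fin d))
    (Δ m a r : ℝ)
    (hΔ : Δ = f x - fstar) (hm : 0 < m)
    (ha : a = K0 + Kρ * (m + Δ) ^ ρ)
    (hr : r = 2 * m / (‖gradient f x‖ + Real.sqrt (‖gradient f x‖ ^ 2 + 4 * a * m))) :
    ∀ y : EuclideanSpace ℝ (Fin d), ‖y - x‖ ≤ r →
      f y ≤ f x + ⟪gradient f x, y - x⟫ + a / 2 * ‖y - x‖ ^ 2 ∧
      f y ≤ f x + m := by
  intro y hy
  have hH : ∀ w, f w ≤ f x + m → ‖fderiv ℝ (gradient f) w‖ ≤ a := fun w hw => by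
    have hgap : 0 ≤ f w - fstar := sub_nonneg.2 (hglb.1 ⟨w, rfl⟩)
    refine (hsmooth w).trans ?_
    rw [ha]
    gcongr
    linarith
  have ha0 : 0 ≤ a := (norm_nonneg _).trans (hH x (by linarith))
  have hroot := mul_add_mul_sq_le_of_eq_root (norm_nonneg _) ha0 hm.le hr
  have hyx : ‖gradient f x‖ * ‖y - x‖ + a / 2 * ‖y - x‖ ^ 2 ≤ m := by
    have : 0 ≤ ‖y - x‖ := norm_nonneg _
    calc _ ≤ ‖gradient f x‖ * r + a / 2 * r ^ 2 := by gcongr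
      _ ≤ m := by nlinarith [mul_nonneg ha0 (sq_nonneg r)]
  have hdesc := le_add_inner_gradient_add_of_norm_fderiv_gradient_le hf fun w hw =>
    hH w (segment_subset_sublevel_of_norm_fderiv_gradient_le hf hm hH hyx w hw)
  refine ⟨hdesc, hdesc.trans ?_⟩
  linarith [real_inner_le_norm (gradient f x) (y - x)]

/-- If `f` is `(ρ, K₀, K_ρ)`-smooth with `f* = inf f > −∞`, `Δ = f(x) − f*`,
`m > 0`, `a = K₀ + K_ρ(m + Δ)^ρ` and `r = 2m/(‖∇f(x)‖ + √(‖∇f(x)‖² + 4am))`, then for every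
`y` with `‖y − x‖ ≤ r` one has `f(y) ≤ f(x) + ⟨∇f(x), y − x⟩ + (a/2)‖y − x‖²` and
consequently `f(y) ≤ f(x) + m`. -/
theorem statement5 (d : ℕ) (f : EuclideanSpace ℝ (Fin d) → ℝ)
    (hf : ContDiff ℝ 2 f)
    (ρ K0 Kρ : ℝ) (hρ : 0 < ρ) (hK0 : 0 ≤ K0) (hKρ : 0 ≤ Kρ)
    (fstar : ℝ) (hglb : IsGLB (Set.range f) fstar)
    (hsmooth : ∀ w, ‖fderiv ℝ (gradient f) w‖ ≤ K0 + Kρ * (f w - fstar) ^ ρ)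
    (x : EuclideanSpace ℝ (Fin d))
    (Δ m a r : ℝ)
    (hΔ : Δ = f x - fstar) (hm : 0 < m)
    (ha : a = K0 + Kρ * (m + Δ) ^ ρ)
    (hr : r = 2 * m / (‖gradient f x‖ + Real.sqrt (‖gradient f x‖ ^ 2 + 4 * a * m))) :
    ∀ y : EuclideanSpace ℝ (Fin d), ‖y - x‖ ≤ r →
      f y ≤ f x + ⟪gradient f x, y - x⟫ + a / 2 * ‖y - x‖ ^ 2 ∧
      f y ≤ f x + m :=
  statement5_general d f hf ρ K0 Kρ hρ hKρ fstar hglb hsmooth x Δ m a r hΔ hm ha hr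
end

section
/- Let f : ℝ^d → ℝ be convex and (ρ, K₀, K_ρ)-smooth with K₀, K_ρ > 0 and f* = inf f > −∞, attained at a minimizer w* ∈ ℝ^d. Let w₀ ∈ ℝ^d, D₀ = ‖w₀ − w*‖ and Δ₀ = f(w₀) − f* < ∞. Consider gradient descent with the warmup schedule η_t = (1/(8√2 + 8)) · min{1/K₀, 1/(3^ρ K_ρ Δ_t^ρ)}, i.e. w_{t+1} = w_t − η_t ∇f(w_t), where Δ_t = f(w_t) − f*. Then for every T ≥ 1: Δ_{t+1} ≤ Δ_t for all t < T, ∑_{t=0}^{T−1} η_t Δ_t ≤ D₀²/2, and consequently Δ_{T−1} ≤ D₀² / (2 ∑_{t=0}^{T−1} η_t). -/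
/-!
Fix `x` with `Δ = f x - f* > 0` and put `L = K₀ + K_ρ (3Δ)^ρ`, a bound for the Hessian on the
sublevel set `{f ≤ f* + 3Δ}`. Along a segment on which the quadratic upper model of `f` with
constant `L` stays below `f* + 3Δ`, `f` cannot leave that sublevel set: at the first exit time the
model, valid up to then, would already bound `f` below the level. Hence the usual `L`-smooth
estimates hold locally: the descent lemma for steps `τ ≤ 1/L`, which gives `‖∇f x‖² ≤ 2LΔ`, and
`f (w* + ∇f x / L) ≤ f* + ‖∇f x‖² / (2L)`. Convexity at `w* + ∇f x / L` then yields
`⟪∇f x, x - w*⟫ ≥ Δ + ‖∇f x‖² / (2L)`, so a step of size `η ≤ 1/L` satisfies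
`‖x - η ∇f x - w*‖² ≤ ‖x - w*‖² - 2ηΔ`. The warmup rate is at most `1/L`; telescoping bounds
`∑ η_t Δ_t`, and the monotonicity of `Δ_t` gives the last claim.
-/

open Real Set Finset
open scoped Gradient InnerProductSpace

noncomputable def warmupRate (ρ K₀ Kρ Δ : ℝ) : ℝ :=
  1 / (8 * √2 + 8) * min (1 / K₀) (1 / (3 ^ ρ * Kρ * Δ ^ ρ))

section WarmupRate

variable {ρ K₀ Kρ Δ : ℝ}

lemma warmupRate_nonneg (hK₀ : 0 ≤ K₀) (hKρ : 0 ≤ Kρ) (hΔ : 0 ≤ Δ) :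
    0 ≤ warmupRate ρ K₀ Kρ Δ := by
  unfold warmupRate; positivity

lemma warmupRate_pos (hK₀ : 0 < K₀) (hKρ : 0 < Kρ) (hΔ : 0 < Δ) :
    0 < warmupRate ρ K₀ Kρ Δ := by
  unfold warmupRate
  have : 0 < 3 ^ ρ * Kρ * Δ ^ ρ := by positivity
  exact mul_pos (by positivity) (lt_min (by positivity) (by positivity))

lemma warmupRate_mul_le_one (hK₀ : 0 ≤ K₀) (hKρ : 0 ≤ Kρ) (hΔ : 0 ≤ Δ) :
    warmupRate ρ K₀ Kρ Δ * (K₀ + Kρ * (3 * Δ) ^ ρ) ≤ 1 := by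
  set P := 3 ^ ρ * Kρ * Δ ^ ρ
  have hP : 0 ≤ P := by positivity
  have hone_div_mul (a : ℝ) : 1 / a * a ≤ 1 := by
    rcases eq_or_ne a 0 with rfl | ha
    · simp
    · rw [one_div_mul_cancel ha]
  have hsum : min (1 / K₀) (1 / P) * (K₀ + P) ≤ 2 := by
    rw [mul_add]
    have := mul_le_mul_of_nonneg_right (min_le_left (1 / K₀) (1 / P)) hK₀
    have := mul_le_mul_of_nonneg_right (min_le_right (1 / K₀) (1 / P)) hP
    linarith [hone_div_mul K₀, hone_div_mul P]
  have hconst : 2 / (8 * √2 + 8) ≤ 1 := by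
    rw [div_le_one (by positivity)]; nlinarith [Real.sqrt_nonneg 2]
  calc warmupRate ρ K₀ Kρ Δ * (K₀ + Kρ * (3 * Δ) ^ ρ)
      = 1 / (8 * √2 + 8) * (min (1 / K₀) (1 / P) * (K₀ + P)) := by
        rw [warmupRate, Real.mul_rpow (by norm_num) hΔ]; ring
    _ ≤ 1 / (8 * √2 + 8) * 2 := by gcongr
    _ ≤ 1 := by rw [← mul_div_right_comm, one_mul]; exact hconst

end WarmupRate

section SublevelSmooth

variable {E : Type*} [NormedAddCommGroup E] [InnerProductSpace ℝ E] [CompleteSpace E] {f : E → ℝ}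

lemma hasDerivAt_apply_add_smul {x v : E} {s : ℝ} (hf : DifferentiableAt ℝ f (x + s • v)) :
    HasDerivAt (fun r : ℝ => f (x + r • v)) ⟪∇ f (x + s • v), v⟫_ℝ s := by
  have hline : HasDerivAt (fun r : ℝ => x + r • v) v s := by
    simpa using ((hasDerivAt_id s).smul_const v).const_add x
  rw [inner_gradient_left]
  exact hf.hasFDerivAt.comp_hasDerivAt s hline

lemma ContDiff.differentiable_gradient_s10 {n : WithTop ℕ∞} (hf : ContDiff ℝ n f) (hn : 2 ≤ n) :
    Differentiable ℝ (∇ f) :=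
  ((InnerProductSpace.toDual ℝ E).symm.contDiff.comp
    (hf.fderiv_right (m := 1) hn)).differentiable one_ne_zero

lemma IsLocalMin.gradient_eq_zero {a : E} (h : IsLocalMin f a) : ∇ f a = 0 := by
  simp [gradient, h.fderiv_eq_zero]

lemma ConvexOn.add_inner_gradient_le (hconv : ConvexOn ℝ univ f) {x : E}
    (hf : DifferentiableAt ℝ f x) (y : E) : f x + ⟪∇ f x, y - x⟫_ℝ ≤ f y := by
  have hline : ConvexOn ℝ univ (fun s : ℝ => f (x + s • (y - x))) := by
    have h := hconv.comp_affineMap (AffineMap.lineMap x y)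
    rw [preimage_univ] at h
    refine h.congr fun s _ => ?_
    simp [AffineMap.lineMap_apply_module', add_comm]
  have hderiv := hasDerivAt_apply_add_smul (f := f) (x := x) (v := y - x) (s := 0) (by simpa)
  rw [zero_smul, add_zero] at hderiv
  have := hline.le_slope_of_hasDerivAt (mem_univ 0) (mem_univ 1) zero_lt_one hderiv
  rw [slope_def_field] at this
  simp only [zero_smul, add_zero, one_smul, add_sub_cancel, sub_zero, div_one] at this
  linarith

lemma apply_add_le_of_norm_fderiv_gradient_le (hf : Differentiable ℝ f)
    (hg : Differentiable ℝ (∇ f)) {x v : E} {M : ℝ}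
    (hM : ∀ s ∈ Ico (0 : ℝ) 1, ‖fderiv ℝ (∇ f) (x + s • v)‖ ≤ M) :
    f (x + v) ≤ f x + ⟪∇ f x, v⟫_ℝ + M / 2 * ‖v‖ ^ 2 := by
  have hline (r : ℝ) : HasDerivAt (fun r : ℝ => x + r • v) v r := by
    simpa using ((hasDerivAt_id r).smul_const v).const_add x
  have hlip : ∀ s ∈ Icc (0 : ℝ) 1, ‖∇ f (x + s • v) - ∇ f x‖ ≤ M * ‖v‖ * s := by
    have := norm_image_sub_le_of_norm_deriv_le_segment' (a := 0) (b := 1)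
      (f := fun r : ℝ => ∇ f (x + r • v)) (f' := fun r => fderiv ℝ (∇ f) (x + r • v) v)
      (C := M * ‖v‖) (fun r _ => ((hg _).hasFDerivAt.comp_hasDerivAt r (hline r)).hasDerivWithinAt)
      (fun r hr => (ContinuousLinearMap.le_opNorm _ _).trans
        (mul_le_mul_of_nonneg_right (hM r hr) (norm_nonneg v)))
    simpa using this
  set φ : ℝ → ℝ := fun s => f (x + s • v) - s * ⟪∇ f x, v⟫_ℝ - M / 2 * ‖v‖ ^ 2 * s ^ 2
  have hφ (s : ℝ) : HasDerivAt φ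
      (⟪∇ f (x + s • v), v⟫_ℝ - ⟪∇ f x, v⟫_ℝ - M * ‖v‖ ^ 2 * s) s := by
    have h := ((hasDerivAt_apply_add_smul (x := x) (v := v) (hf _)).sub
      ((hasDerivAt_id s).mul_const ⟪∇ f x, v⟫_ℝ)).sub
      ((hasDerivAt_pow 2 s).const_mul (M / 2 * ‖v‖ ^ 2))
    exact h.congr_deriv (by push_cast; ring)
  have hanti : AntitoneOn φ (Icc 0 1) := by
    refine antitoneOn_of_hasDerivWithinAt_nonpos (convex_Icc 0 1)
      (fun s _ => (hφ s).continuousAt.continuousWithinAt) (fun s _ => (hφ s).hasDerivWithinAt)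
      fun s hs => ?_
    rw [interior_Icc] at hs
    have hs' : s ∈ Icc (0 : ℝ) 1 := Ioo_subset_Icc_self hs
    calc ⟪∇ f (x + s • v), v⟫_ℝ - ⟪∇ f x, v⟫_ℝ - M * ‖v‖ ^ 2 * s
        = ⟪∇ f (x + s • v) - ∇ f x, v⟫_ℝ - M * ‖v‖ ^ 2 * s := by rw [inner_sub_left]
      _ ≤ ‖∇ f (x + s • v) - ∇ f x‖ * ‖v‖ - M * ‖v‖ ^ 2 * s := by
          gcongr; exact real_inner_le_norm _ _
      _ ≤ M * ‖v‖ * s * ‖v‖ - M * ‖v‖ ^ 2 * s := by gcongr; exact hlip s hs'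
      _ = 0 := by ring
  have := hanti (left_mem_Icc.2 zero_le_one) (right_mem_Icc.2 zero_le_one) zero_le_one
  simp only [φ, zero_smul, add_zero, one_smul, zero_mul, one_mul, sub_zero] at this
  linarith

lemma apply_add_le_of_norm_fderiv_gradient_le_on_sublevel (hf : Differentiable ℝ f)
    (hg : Differentiable ℝ (∇ f)) {c L : ℝ}
    (hL : ∀ u, f u ≤ c → ‖fderiv ℝ (∇ f) u‖ ≤ L) {x v : E}
    (hq : ∀ s ∈ Icc (0 : ℝ) 1, f x + s * ⟪∇ f x, v⟫_ℝ + L / 2 * s ^ 2 * ‖v‖ ^ 2 < c) :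
    f (x + v) ≤ f x + ⟪∇ f x, v⟫_ℝ + L / 2 * ‖v‖ ^ 2 := by
  have hstay : ∀ s ∈ Icc (0 : ℝ) 1, f (x + s • v) < c := by
    by_contra! hexit
    have hcont : Continuous fun s : ℝ => f (x + s • v) := hf.continuous.comp (by fun_prop)
    obtain ⟨s₀, ⟨hs₀, hcs₀⟩, hfirst⟩ :=
      (isCompact_Icc.inter_right (isClosed_le continuous_const hcont)).exists_isLeast hexit
    have hbefore : ∀ r ∈ Ico (0 : ℝ) 1, f (x + r • s₀ • v) ≤ c := by
      intro r hr
      rw [smul_smul]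
      by_contra! hr'
      have hle : s₀ ≤ r * s₀ :=
        hfirst ⟨⟨mul_nonneg hr.1 hs₀.1,
          by nlinarith [mul_nonneg (sub_nonneg.2 hr.2.le) hs₀.1, hs₀.2]⟩, hr'.le⟩
      have hzero : s₀ = 0 := by nlinarith [hr.2, hs₀.1]
      have := hq 0 (left_mem_Icc.2 zero_le_one)
      simp only [hzero, mul_zero, zero_smul, add_zero, zero_mul] at hr' this
      linarith
    have := apply_add_le_of_norm_fderiv_gradient_le hf hg fun r hr => hL _ (hbefore r hr)
    rw [inner_smul_right, norm_smul, Real.norm_eq_abs, abs_of_nonneg hs₀.1, mul_pow] at this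
    have hcs₀ : c ≤ f (x + s₀ • v) := hcs₀
    linarith [hq s₀ hs₀]
  simpa using apply_add_le_of_norm_fderiv_gradient_le hf hg
    fun s hs => hL _ (hstay s (Ico_subset_Icc_self hs)).le

section LocalSmoothness

variable (hf : Differentiable ℝ f) (hg : Differentiable ℝ (∇ f)) {c L : ℝ}
  (hL : ∀ u, f u ≤ c → ‖fderiv ℝ (∇ f) u‖ ≤ L) {x : E}
include hf hg hL

lemma apply_sub_smul_gradient_le (hx : f x < c) {τ : ℝ} (hτ : 0 ≤ τ) (hτL : τ * L ≤ 1) :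
    f (x - τ • ∇ f x) ≤ f x - τ / 2 * ‖∇ f x‖ ^ 2 := by
  have hL0 : 0 ≤ L := (norm_nonneg _).trans (hL x hx.le)
  have hinner : ⟪∇ f x, -(τ • ∇ f x)⟫_ℝ = -(τ * ‖∇ f x‖ ^ 2) := by
    rw [inner_neg_right, real_inner_smul_right, real_inner_self_eq_norm_sq]
  have hnorm : ‖-(τ • ∇ f x)‖ ^ 2 = τ ^ 2 * ‖∇ f x‖ ^ 2 := by
    rw [norm_neg, norm_smul, Real.norm_eq_abs, abs_of_nonneg hτ, mul_pow]
  have hτ2 : τ ^ 2 * L ≤ τ := by nlinarith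
  have := apply_add_le_of_norm_fderiv_gradient_le_on_sublevel hf hg hL
    (v := -(τ • ∇ f x)) fun s hs => by
      rw [hinner, hnorm]
      have hG : 0 ≤ ‖∇ f x‖ ^ 2 := by positivity
      have hs2 : s ^ 2 ≤ s := by nlinarith [hs.1, hs.2]
      have : s ^ 2 * (τ ^ 2 * L) * ‖∇ f x‖ ^ 2 ≤ s * τ * ‖∇ f x‖ ^ 2 :=
        mul_le_mul_of_nonneg_right (mul_le_mul hs2 hτ2 (by positivity) hs.1) hG
      nlinarith [mul_nonneg (mul_nonneg hs.1 hτ) hG]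
  rw [← sub_eq_add_neg, hinner, hnorm] at this
  nlinarith [sq_nonneg (‖∇ f x‖)]

lemma sq_norm_gradient_le (hL0 : 0 < L) (hx : f x < c) {m : ℝ} (hm : ∀ u, m ≤ f u) :
    ‖∇ f x‖ ^ 2 ≤ 2 * L * (f x - m) := by
  have := apply_sub_smul_gradient_le hf hg hL hx (τ := L⁻¹) (by positivity)
    (inv_mul_cancel₀ hL0.ne').le
  have h := hm (x - L⁻¹ • ∇ f x)
  rw [← div_le_iff₀' (by positivity)]
  calc ‖∇ f x‖ ^ 2 / (2 * L) = L⁻¹ / 2 * ‖∇ f x‖ ^ 2 := by ring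
    _ ≤ f x - m := by linarith

lemma ConvexOn.sub_add_sq_norm_gradient_div_le_inner (hconv : ConvexOn ℝ univ f) (hL0 : 0 < L)
    (hx : f x < c) {w : E} (hw : ∀ u, f w ≤ f u) :
    f x - f w + ‖∇ f x‖ ^ 2 / (2 * L) ≤ ⟪∇ f x, x - w⟫_ℝ := by
  have hgw : ∇ f w = 0 := IsLocalMin.gradient_eq_zero (Filter.Eventually.of_forall hw)
  have hgx := sq_norm_gradient_le hf hg hL hL0 hx hw
  have hnorm : L / 2 * ‖L⁻¹ • ∇ f x‖ ^ 2 = ‖∇ f x‖ ^ 2 / (2 * L) := by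
    rw [norm_smul, Real.norm_eq_abs, abs_of_pos (inv_pos.2 hL0)]
    field_simp
  have hmodel : ‖∇ f x‖ ^ 2 / (2 * L) < c - f w := by
    rw [div_lt_iff₀ (by positivity)]; nlinarith
  have hup := apply_add_le_of_norm_fderiv_gradient_le_on_sublevel hf hg hL
    (x := w) (v := L⁻¹ • ∇ f x) fun s hs => by
      rw [hgw, inner_zero_left, mul_zero, add_zero]
      have : L / 2 * s ^ 2 * ‖L⁻¹ • ∇ f x‖ ^ 2 ≤ L / 2 * ‖L⁻¹ • ∇ f x‖ ^ 2 := by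
        have : s ^ 2 ≤ 1 := by nlinarith [hs.1, hs.2]
        have : 0 ≤ L / 2 * ‖L⁻¹ • ∇ f x‖ ^ 2 := by positivity
        nlinarith
      linarith
  rw [hgw, inner_zero_left, add_zero, hnorm] at hup
  have hcvx := hconv.add_inner_gradient_le (hf x) (w + L⁻¹ • ∇ f x)
  have hsplit : ⟪∇ f x, w + L⁻¹ • ∇ f x - x⟫_ℝ
      = -⟪∇ f x, x - w⟫_ℝ + L⁻¹ * ‖∇ f x‖ ^ 2 := by
    rw [show w + L⁻¹ • ∇ f x - x = -(x - w) + L⁻¹ • ∇ f x by abel, inner_add_right,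
      inner_neg_right, real_inner_smul_right, real_inner_self_eq_norm_sq]
  have hhalf : L⁻¹ * ‖∇ f x‖ ^ 2 = 2 * (‖∇ f x‖ ^ 2 / (2 * L)) := by field_simp
  linarith

lemma ConvexOn.norm_sub_smul_gradient_sub_sq_le (hconv : ConvexOn ℝ univ f) (hL0 : 0 < L)
    (hx : f x < c) {w : E} (hw : ∀ u, f w ≤ f u) {η : ℝ} (hη : 0 ≤ η) (hηL : η * L ≤ 1) :
    ‖x - η • ∇ f x - w‖ ^ 2 ≤ ‖x - w‖ ^ 2 - 2 * η * (f x - f w) := by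
  have hco := hconv.sub_add_sq_norm_gradient_div_le_inner hf hg hL hL0 hx hw
  have hexpand : ‖x - η • ∇ f x - w‖ ^ 2
      = ‖x - w‖ ^ 2 - 2 * η * ⟪∇ f x, x - w⟫_ℝ + η ^ 2 * ‖∇ f x‖ ^ 2 := by
    rw [show x - η • ∇ f x - w = (x - w) - η • ∇ f x by abel, norm_sub_sq_real,
      real_inner_smul_right, norm_smul, Real.norm_eq_abs, mul_pow, sq_abs, real_inner_comm]
    ring
  have hη2 : η ^ 2 * ‖∇ f x‖ ^ 2 ≤ 2 * η * (‖∇ f x‖ ^ 2 / (2 * L)) := by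
    have hηinv : η ≤ L⁻¹ := by rw [← one_div, le_div_iff₀ hL0]; exact hηL
    calc η ^ 2 * ‖∇ f x‖ ^ 2 = η * η * ‖∇ f x‖ ^ 2 := by ring
      _ ≤ η * L⁻¹ * ‖∇ f x‖ ^ 2 := by gcongr
      _ = 2 * η * (‖∇ f x‖ ^ 2 / (2 * L)) := by field_simp
  rw [hexpand]
  linarith [mul_le_mul_of_nonneg_left hco (by linarith : 0 ≤ 2 * η)]

end LocalSmoothness

lemma ConvexOn.warmupRate_step (hf : ContDiff ℝ 2 f) (hconv : ConvexOn ℝ univ f) {ρ K₀ Kρ : ℝ}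
    (hρ : 0 ≤ ρ) (hK₀ : 0 ≤ K₀) (hKρ : 0 < Kρ) {w : E} (hw : ∀ u, f w ≤ f u)
    (hsmooth : ∀ u, ‖fderiv ℝ (∇ f) u‖ ≤ K₀ + Kρ * (f u - f w) ^ ρ) (x : E) {η : ℝ}
    (hη : η = warmupRate ρ K₀ Kρ (f x - f w)) :
    f (x - η • ∇ f x) ≤ f x ∧ ‖x - η • ∇ f x - w‖ ^ 2 ≤ ‖x - w‖ ^ 2 - 2 * η * (f x - f w) := by
  rcases (sub_nonneg.2 (hw x)).eq_or_lt with hΔ | hΔ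
  · have hgx : ∇ f x = 0 :=
      IsLocalMin.gradient_eq_zero (Filter.Eventually.of_forall fun u => by linarith [hw u])
    simp [hgx, ← hΔ]
  have hg := hf.differentiable_gradient_s10 le_rfl
  set Δ := f x - f w
  have hL : ∀ u, f u ≤ f w + 3 * Δ → ‖fderiv ℝ (∇ f) u‖ ≤ K₀ + Kρ * (3 * Δ) ^ ρ := fun u hu =>
    (hsmooth u).trans (by gcongr; exacts [sub_nonneg.2 (hw u), by linarith])
  have hx : f x < f w + 3 * Δ := by linarith
  have hL0 : 0 < K₀ + Kρ * (3 * Δ) ^ ρ := by positivity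
  have hη0 : 0 ≤ η := hη ▸ warmupRate_nonneg hK₀ hKρ.le hΔ.le
  have hηL := hη ▸ warmupRate_mul_le_one (ρ := ρ) hK₀ hKρ.le hΔ.le
  have hdiff := hf.differentiable two_ne_zero
  refine ⟨?_, hconv.norm_sub_smul_gradient_sub_sq_le hdiff hg hL hL0 hx hw hη0 hηL⟩
  have := apply_sub_smul_gradient_le hdiff hg hL hx hη0 hηL
  linarith [show 0 ≤ η / 2 * ‖∇ f x‖ ^ 2 by positivity]

end SublevelSmooth

lemma sum_range_le_of_le_sub {a b : ℕ → ℝ} (h : ∀ t, a (t + 1) ≤ a t - b t) (T : ℕ)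
    (haT : 0 ≤ a T) : ∑ t ∈ range T, b t ≤ a 0 :=
  calc ∑ t ∈ range T, b t ≤ ∑ t ∈ range T, (a t - a (t + 1)) :=
        sum_le_sum fun t _ => by linarith [h t]
    _ = a 0 - a T := sum_range_sub' a T
    _ ≤ a 0 := by linarith

lemma Antitone.le_div_sum_of_sum_mul_le {η Δ : ℕ → ℝ} (hΔ : Antitone Δ) (hη : ∀ t, 0 ≤ η t)
    (hpos : ∀ t, 0 < Δ t → 0 < η t) {T : ℕ} (hT : 1 ≤ T) {B : ℝ}
    (hB : ∑ t ∈ range T, η t * Δ t ≤ B) : Δ (T - 1) ≤ B / ∑ t ∈ range T, η t := by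
  rcases (sum_nonneg fun t _ => hη t).eq_or_lt with hzero | hsum
  · have hmem : T - 1 ∈ range T := mem_range.2 (by omega)
    have hlast : η (T - 1) = 0 :=
      (sum_eq_zero_iff_of_nonneg fun t _ => hη t).1 hzero.symm _ hmem
    rw [← hzero, div_zero]
    by_contra! h
    exact (hpos _ h).ne' hlast
  · rw [le_div_iff₀ hsum, mul_sum]
    refine le_trans (sum_le_sum fun t ht => ?_) hB
    rw [mul_comm]
    have htT : t ≤ T - 1 := by have := mem_range.1 ht; omega
    exact mul_le_mul_of_nonneg_left (hΔ htT) (hη t)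

theorem statement10_general (d : ℕ) (f : EuclideanSpace ℝ (Fin d) → ℝ)
    (hf : ContDiff ℝ 2 f)
    (hconv : ConvexOn ℝ Set.univ f)
    (ρ K0 Kρ : ℝ) (hρ : 0 < ρ) (hK0 : 0 < K0) (hKρ : 0 < Kρ)
    (fstar : ℝ)
    (hsmooth : ∀ v, ‖fderiv ℝ (gradient f) v‖ ≤ K0 + Kρ * (f v - fstar) ^ ρ)
    (wstar : EuclideanSpace ℝ (Fin d))
    (hmin : ∀ v, f wstar ≤ f v) (hfstar : f wstar = fstar)
    (w : ℕ → EuclideanSpace ℝ (Fin d))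
    (η : ℕ → ℝ)
    (hη : ∀ t, η t = (1 / (8 * Real.sqrt 2 + 8)) *
      min (1 / K0) (1 / (3 ^ ρ * Kρ * (f (w t) - fstar) ^ ρ)))
    (hrec : ∀ t, w (t + 1) = w t - η t • gradient f (w t))
    (T : ℕ) (hT : 1 ≤ T) :
    (∀ t < T, f (w (t + 1)) - fstar ≤ f (w t) - fstar) ∧
    (∑ t ∈ Finset.range T, η t * (f (w t) - fstar) ≤ ‖w 0 - wstar‖ ^ 2 / 2) ∧
    (f (w (T - 1)) - fstar ≤ ‖w 0 - wstar‖ ^ 2 / (2 * ∑ t ∈ Finset.range T, η t)) := by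
  subst hfstar
  have hstep (t : ℕ) : f (w (t + 1)) ≤ f (w t) ∧
      ‖w (t + 1) - wstar‖ ^ 2 ≤ ‖w t - wstar‖ ^ 2 - 2 * η t * (f (w t) - f wstar) := by
    rw [hrec t]
    exact hconv.warmupRate_step hf hρ.le hK0.le hKρ hmin hsmooth (w t) (hη t)
  have hsum : ∑ t ∈ range T, η t * (f (w t) - f wstar) ≤ ‖w 0 - wstar‖ ^ 2 / 2 := by
    have := sum_range_le_of_le_sub (a := fun t => ‖w t - wstar‖ ^ 2)
      (b := fun t => 2 * (η t * (f (w t) - f wstar))) (fun t => by linarith [(hstep t).2]) T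
      (sq_nonneg _)
    rw [← mul_sum] at this
    linarith
  refine ⟨fun t _ => by linarith [(hstep t).1], hsum, ?_⟩
  have hanti : Antitone fun t => f (w t) - f wstar :=
    antitone_nat_of_succ_le fun t => by linarith [(hstep t).1]
  rw [← div_div]
  exact hanti.le_div_sum_of_sum_mul_le
    (fun t => (hη t).trans_ge (warmupRate_nonneg hK0.le hKρ.le (sub_nonneg.2 (hmin _))))
    (fun t hΔ => (hη t).trans_gt (warmupRate_pos hK0 hKρ hΔ)) hT hsum

/-- GD with the warmup schedule, convex case. For a convex
`(ρ, K₀, K_ρ)`-smooth function with minimizer `w*`, gradient descent with learning rates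
`η_t = (1/(8√2+8)) min{1/K₀, 1/(3^ρ K_ρ Δ_t^ρ)}` satisfies `Δ_{t+1} ≤ Δ_t`,
`∑_{t<T} η_t Δ_t ≤ D₀²/2` and `Δ_{T−1} ≤ D₀² / (2 ∑_{t<T} η_t)`. -/
theorem statement10 (d : ℕ) (f : EuclideanSpace ℝ (Fin d) → ℝ)
    (hf : ContDiff ℝ 2 f)
    (hconv : ConvexOn ℝ Set.univ f)
    (ρ K0 Kρ : ℝ) (hρ : 0 < ρ) (hK0 : 0 < K0) (hKρ : 0 < Kρ)
    (fstar : ℝ) (hglb : IsGLB (Set.range f) fstar)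
    (hsmooth : ∀ v, ‖fderiv ℝ (gradient f) v‖ ≤ K0 + Kρ * (f v - fstar) ^ ρ)
    (wstar : EuclideanSpace ℝ (Fin d))
    (hmin : ∀ v, f wstar ≤ f v) (hfstar : f wstar = fstar)
    (w : ℕ → EuclideanSpace ℝ (Fin d))
    (η : ℕ → ℝ)
    (hη : ∀ t, η t = (1 / (8 * Real.sqrt 2 + 8)) *
      min (1 / K0) (1 / (3 ^ ρ * Kρ * (f (w t) - fstar) ^ ρ)))
    (hrec : ∀ t, w (t + 1) = w t - η t • gradient f (w t))
    (T : ℕ) (hT : 1 ≤ T) :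
    (∀ t < T, f (w (t + 1)) - fstar ≤ f (w t) - fstar) ∧
    (∑ t ∈ Finset.range T, η t * (f (w t) - fstar) ≤ ‖w 0 - wstar‖ ^ 2 / 2) ∧
    (f (w (T - 1)) - fstar ≤ ‖w 0 - wstar‖ ^ 2 / (2 * ∑ t ∈ Finset.range T, η t)) :=
  statement10_general d f hf hconv ρ K0 Kρ hρ hK0 hKρ fstar hsmooth wstar hmin hfstar w η hη hrec T
    hT
end
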